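/- For multiplicative functions u, v, w, w' bounded by 1, the distance D satisfies D(u·w, v·w') ≤ D(u, v) + D(w, w'), where u·w denotes the pointwise product. -/

import Mathlib

/-!
For `‖z‖, ‖w‖ ≤ 1` one has `√(1 - Re (z w)) ≤ √(1 - Re z) + √(1 - Re w)`: writing `a = 1 - Re z`,
`b = 1 - Re w`, this is `a + b - ab + Im z Im w ≤ (√a + √b)²`, and `(Im z)² ≤ 2a`, `(Im w)² ≤ 2b`.
Applied at each prime `p` to `u(p) v̄(p)` and `w(p) w̄'(p)`, it shows that the `ℓ²` vector whose norm
is `D(u w, v w')` is dominated coordinatewise by the sum of those for `D(u, v)` and `D(w, w')`, and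
Minkowski's inequality in `ℓ²` concludes.
-/

open scoped ENNReal

/-- The "pretentious" distance between two arithmetic functions, with values in `[0,∞]`. -/
noncomputable def Ddist (u v : ℕ → ℂ) : ℝ≥0∞ :=
  (∑' p : Nat.Primes,
      ENNReal.ofReal ((1 - (u p * starRingEnd ℂ (v p)).re) / p)) ^ (1 / 2 : ℝ)

open scoped ComplexConjugate

namespace Complex

lemma im_sq_le_two_mul_one_sub_re {z : ℂ} (hz : ‖z‖ ≤ 1) : z.im ^ 2 ≤ 2 * (1 - z.re) := by
  have hnormSq : z.re * z.re + z.im * z.im ≤ 1 := by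
    rw [← normSq_apply, ← Complex.sq_norm]
    nlinarith [norm_nonneg z]
  nlinarith [abs_re_le_norm z, neg_abs_le z.re]

lemma sqrt_one_sub_re_mul_le {z w : ℂ} (hz : ‖z‖ ≤ 1) (hw : ‖w‖ ≤ 1) :
    √(1 - (z * w).re) ≤ √(1 - z.re) + √(1 - w.re) := by
  have ha : 0 ≤ 1 - z.re := by linarith [re_le_norm z]
  have hb : 0 ≤ 1 - w.re := by linarith [re_le_norm w]
  have him : |z.im * w.im| ≤ 2 * (√(1 - z.re) * √(1 - w.re)) := by
    refine abs_le_of_sq_le_sq ?_ (by positivity)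
    rw [mul_pow, mul_pow, mul_pow, Real.sq_sqrt ha, Real.sq_sqrt hb]
    nlinarith [im_sq_le_two_mul_one_sub_re hz, im_sq_le_two_mul_one_sub_re hw, sq_nonneg z.im]
  rw [Real.sqrt_le_left (by positivity), mul_re]
  nlinarith [Real.sq_sqrt ha, Real.sq_sqrt hb, mul_nonneg ha hb, le_abs_self (z.im * w.im)]

end Complex

lemma ENNReal.ofReal_sqrt_rpow_two (x : ℝ) : ENNReal.ofReal √x ^ (2 : ℝ) = ENNReal.ofReal x := by
  rw [ENNReal.rpow_two, ← ENNReal.ofReal_pow (Real.sqrt_nonneg x), Real.sq_sqrt',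
    ENNReal.ofReal_max, ENNReal.ofReal_zero, max_zero]

lemma ENNReal.Lp_add_le_tsum {ι : Type*} (f g : ι → ℝ≥0∞) {p : ℝ} (hp : 1 ≤ p) :
    (∑' i, (f i + g i) ^ p) ^ (1 / p) ≤
      (∑' i, f i ^ p) ^ (1 / p) + (∑' i, g i ^ p) ^ (1 / p) := by
  have rpow_le_iff (x y : ℝ≥0∞) : x ^ (1 / p) ≤ y ↔ x ≤ y ^ p := by
    rw [one_div]; exact ENNReal.rpow_inv_le_iff (by linarith)
  rw [rpow_le_iff, ENNReal.tsum_eq_iSup_sum]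
  refine iSup_le fun s => ?_
  calc ∑ i ∈ s, (f i + g i) ^ p
      ≤ ((∑ i ∈ s, f i ^ p) ^ (1 / p) + (∑ i ∈ s, g i ^ p) ^ (1 / p)) ^ p :=
        (rpow_le_iff _ _).1 (ENNReal.Lp_add_le s f g hp)
    _ ≤ ((∑' i, f i ^ p) ^ (1 / p) + (∑' i, g i ^ p) ^ (1 / p)) ^ p := by
        gcongr <;> exact ENNReal.sum_le_tsum s

/-- The `p`-th coordinate of the `ℓ²` vector whose norm is `Ddist u v`. -/
noncomputable def primeDefect (u v : ℕ → ℂ) (p : Nat.Primes) : ℝ≥0∞ :=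
  ENNReal.ofReal √((1 - (u p * conj (v p)).re) / p)

lemma Ddist_eq_tsum_primeDefect (u v : ℕ → ℂ) :
    Ddist u v = (∑' p, primeDefect u v p ^ (2 : ℝ)) ^ (1 / 2 : ℝ) := by
  simp only [Ddist, primeDefect, ENNReal.ofReal_sqrt_rpow_two]

lemma norm_mul_conj_le_one {z w : ℂ} (hz : ‖z‖ ≤ 1) (hw : ‖w‖ ≤ 1) : ‖z * conj w‖ ≤ 1 := by
  rw [norm_mul, Complex.norm_conj]
  exact mul_le_one₀ hz (norm_nonneg _) hw

lemma primeDefect_mul_le {u v w w' : ℕ → ℂ} {p : Nat.Primes} (hu : ‖u p‖ ≤ 1)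
    (hv : ‖v p‖ ≤ 1) (hw : ‖w p‖ ≤ 1) (hw' : ‖w' p‖ ≤ 1) :
    primeDefect (fun n => u n * w n) (fun n => v n * w' n) p ≤
      primeDefect u v p + primeDefect w w' p := by
  have hp : (0 : ℝ) ≤ (p : ℕ) := Nat.cast_nonneg _
  have hconj : u p * w p * conj (v p * w' p) = u p * conj (v p) * (w p * conj (w' p)) := by
    rw [map_mul]; ring
  rw [primeDefect, primeDefect, primeDefect,
    ← ENNReal.ofReal_add (Real.sqrt_nonneg _) (Real.sqrt_nonneg _)]
  refine ENNReal.ofReal_le_ofReal ?_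
  rw [Real.sqrt_div' _ hp, Real.sqrt_div' _ hp, Real.sqrt_div' _ hp, ← add_div, hconj]
  gcongr
  exact Complex.sqrt_one_sub_re_mul_le (norm_mul_conj_le_one hu hv) (norm_mul_conj_le_one hw hw')

theorem Ddist_mul_le_general (u v w w' : ℕ → ℂ)
    (hub : ∀ n : ℕ, ‖u n‖ ≤ 1)
    (hvb : ∀ n : ℕ, ‖v n‖ ≤ 1)
    (hwb : ∀ n : ℕ, ‖w n‖ ≤ 1)
    (hw'b : ∀ n : ℕ, ‖w' n‖ ≤ 1) :
    Ddist (fun n => u n * w n) (fun n => v n * w' n) ≤ Ddist u v + Ddist w w' := by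
  simp only [Ddist_eq_tsum_primeDefect]
  calc _ ≤ (∑' p, (primeDefect u v p + primeDefect w w' p) ^ (2 : ℝ)) ^ (1 / 2 : ℝ) := by
        gcongr with p
        exact primeDefect_mul_le (hub p) (hvb p) (hwb p) (hw'b p)
    _ ≤ _ := by
        simpa only [one_div] using
          ENNReal.Lp_add_le_tsum (primeDefect u v) (primeDefect w w') one_le_two

theorem Ddist_mul_le (u v w w' : ℕ → ℂ)
    (hu1 : u 1 = 1) (hu : ∀ m n : ℕ, Nat.Coprime m n → u (m * n) = u m * u n)
    (hub : ∀ n : ℕ, ‖u n‖ ≤ 1)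
    (hv1 : v 1 = 1) (hv : ∀ m n : ℕ, Nat.Coprime m n → v (m * n) = v m * v n)
    (hvb : ∀ n : ℕ, ‖v n‖ ≤ 1)
    (hw1 : w 1 = 1) (hw : ∀ m n : ℕ, Nat.Coprime m n → w (m * n) = w m * w n)
    (hwb : ∀ n : ℕ, ‖w n‖ ≤ 1)
    (hw'1 : w' 1 = 1) (hw' : ∀ m n : ℕ, Nat.Coprime m n → w' (m * n) = w' m * w' n)
    (hw'b : ∀ n : ℕ, ‖w' n‖ ≤ 1) :
    Ddist (fun n => u n * w n) (fun n => v n * w' n) ≤ Ddist u v + Ddist w w' :=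
  Ddist_mul_le_general u v w w' hub hvb hwb hw'b
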